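/- arXiv:2001.05196 — 2 statements merged into one kernel-verified Lean document; each statement's English description precedes it below -/
import Mathlib

section
/- In the game G_0 determined by bilinear forms q_1,…,q_ℓ, if Player 1 plays the uniform distribution z on S_1 = {1,−1}×{1,…,ℓ}, then for all mixed strategies x,y of Players 2 and 3, u_1(z,x,y) = u_2(z,x,y) = u_3(z,x,y) = 0. Consequently, every Nash equilibrium payoff profile of G_0 is of the form (2u,−u,−u) with u ≥ 0. -/
open Finset

noncomputable section

/-- The sign associated to `s ∈ {1,−1}`, with `true` = +1 and `false` = −1. -/
def sgn (s : Bool) : ℝ := if s then 1 else -1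

/-- A mixed strategy: a probability distribution on a finite action set. -/
def IsDist {α : Type*} [Fintype α] (x : α → ℝ) : Prop :=
  (∀ i, 0 ≤ x i) ∧ ∑ i, x i = 1

variable {n ℓ : ℕ}

/-- The homogeneous bilinear form `q_k(x,y) = Σ_{i,j} a_{ij}^{(k)} x_i y_j`. -/
def qform (a : Fin ℓ → Fin (n+1) → Fin (n+1) → ℤ) (k : Fin ℓ)
    (x y : Fin (n+1) → ℝ) : ℝ :=
  ∑ i, ∑ j, (a k i j : ℝ) * x i * y j

/-- Payoff to Player 1 in the game G₀ on the pure profile ((s,k),i,j). -/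
def pay1 (a : Fin ℓ → Fin (n+1) → Fin (n+1) → ℤ)
    (sk : Bool × Fin ℓ) (i j : Fin (n+1)) : ℝ :=
  2 * sgn sk.1 * (a sk.2 i j : ℝ)

/-- Payoff to Player 2 (and to Player 3) in G₀ on the pure profile ((s,k),i,j). -/
def pay23 (a : Fin ℓ → Fin (n+1) → Fin (n+1) → ℤ)
    (sk : Bool × Fin ℓ) (i j : Fin (n+1)) : ℝ :=
  -(sgn sk.1 * (a sk.2 i j : ℝ))

/-- Expected payoff in G₀ for a payoff table `f` under a mixed profile (z,x,y). -/
def Eg (f : Bool × Fin ℓ → Fin (n+1) → Fin (n+1) → ℝ)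
    (z : Bool × Fin ℓ → ℝ) (x y : Fin (n+1) → ℝ) : ℝ :=
  ∑ sk, ∑ i, ∑ j, z sk * x i * y j * f sk i j

/-- `(z,x,y)` is a (mixed) Nash equilibrium of the zero-sum game G₀. -/
def G0NE (a : Fin ℓ → Fin (n+1) → Fin (n+1) → ℤ)
    (z : Bool × Fin ℓ → ℝ) (x y : Fin (n+1) → ℝ) : Prop :=
  IsDist z ∧ IsDist x ∧ IsDist y ∧
  (∀ z', IsDist z' → Eg (pay1 a) z' x y ≤ Eg (pay1 a) z x y) ∧
  (∀ x', IsDist x' → Eg (pay23 a) z x' y ≤ Eg (pay23 a) z x y) ∧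
  (∀ y', IsDist y' → Eg (pay23 a) z x y' ≤ Eg (pay23 a) z x y)

/-- The uniform distribution on Player 1's action set {1,−1}×{1,…,ℓ}. -/
def unif (ℓ : ℕ) : Bool × Fin ℓ → ℝ := fun _ => 1 / (2 * ℓ)

end

/-! Player 1's payoff is odd in the sign `s`, so any strategy giving both signs equal weight,
in particular the uniform one, earns 0 against every `x, y`. At an equilibrium Player 1 cannot
do worse than this deviation, and Players 2 and 3 each receive `-1/2` of Player 1's payoff. -/

theorem isDist_unif {ℓ : ℕ} (hℓ : 0 < ℓ) : IsDist (unif ℓ) := by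
  refine ⟨fun _ => by unfold unif; positivity, ?_⟩
  simp only [unif, Finset.sum_const, Finset.card_univ, Fintype.card_prod, Fintype.card_bool,
    Fintype.card_fin, nsmul_eq_mul]
  field_simp
  push_cast
  ring

section G0

variable {n ℓ : ℕ} (a : Fin ℓ → Fin (n+1) → Fin (n+1) → ℤ)

theorem Eg_pay23_eq (z : Bool × Fin ℓ → ℝ) (x y : Fin (n+1) → ℝ) :
    Eg (pay23 a) z x y = -Eg (pay1 a) z x y / 2 := by
  simp only [Eg, pay1, pay23, neg_div, ← Finset.sum_neg_distrib, Finset.sum_div]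
  refine Finset.sum_congr rfl fun _ _ => Finset.sum_congr rfl fun _ _ =>
    Finset.sum_congr rfl fun _ _ => ?_
  ring

theorem Eg_pay1_eq_zero_of_sign_symm {z : Bool × Fin ℓ → ℝ}
    (hz : ∀ k, z (true, k) = z (false, k)) (x y : Fin (n+1) → ℝ) :
    Eg (pay1 a) z x y = 0 := by
  simp only [Eg, Fintype.sum_prod_type, Fintype.sum_bool, ← Finset.sum_add_distrib]
  refine Finset.sum_eq_zero fun k _ => Finset.sum_eq_zero fun i _ =>
    Finset.sum_eq_zero fun j _ => ?_
  simp only [pay1, sgn, hz k, if_true, Bool.false_eq_true, if_false]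
  ring

theorem Eg_pay1_unif (x y : Fin (n+1) → ℝ) : Eg (pay1 a) (unif ℓ) x y = 0 :=
  Eg_pay1_eq_zero_of_sign_symm a (fun _ => rfl) x y

theorem G0NE.Eg_pay1_nonneg {z : Bool × Fin ℓ → ℝ} {x y : Fin (n+1) → ℝ}
    (hne : G0NE a z x y) (hℓ : 0 < ℓ) : 0 ≤ Eg (pay1 a) z x y :=
  Eg_pay1_unif a x y ▸ hne.2.2.2.1 _ (isDist_unif hℓ)

end G0

/-- If Player 1 plays the uniform distribution on {1,−1}×{1,…,ℓ}, all players get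
payoff 0 against any mixed strategies x,y. Consequently every Nash equilibrium
payoff profile of G₀ is of the form (2u,−u,−u) with u ≥ 0. -/
theorem stmt12 {n ℓ : ℕ} (hℓ : 0 < ℓ) (a : Fin ℓ → Fin (n+1) → Fin (n+1) → ℤ) :
    (∀ x y : Fin (n+1) → ℝ, IsDist x → IsDist y →
      Eg (pay1 a) (unif ℓ) x y = 0 ∧ Eg (pay23 a) (unif ℓ) x y = 0) ∧
    (∀ (z : Bool × Fin ℓ → ℝ) (x y : Fin (n+1) → ℝ), G0NE a z x y →
      ∃ u : ℝ, 0 ≤ u ∧ Eg (pay1 a) z x y = 2 * u ∧ Eg (pay23 a) z x y = -u) := by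
  refine ⟨fun x y _ _ => ⟨Eg_pay1_unif a x y, ?_⟩, fun z x y hne => ?_⟩
  · rw [Eg_pay23_eq, Eg_pay1_unif]
    simp
  · refine ⟨Eg (pay1 a) z x y / 2, by linarith [hne.Eg_pay1_nonneg a hℓ], by ring, ?_⟩
    rw [Eg_pay23_eq, neg_div]
end

section
/- Let D_1 be a symmetric 3-player game with a distinguished action ⊥ such that: when no player plays ⊥ the payoffs are those of a symmetric game D_0 whose symmetric Nash equilibria give each player payoff at most K; when exactly one player plays ⊥ every player gets K; and when at least two players play ⊥ every player gets K+1. Then (⊥,⊥,⊥) is a symmetric Nash equilibrium of D_1 with payoff K+1 to every player, and every other symmetric Nash equilibrium (y,y,y) of D_1 assigns probability 0 to ⊥ and is a symmetric Nash equilibrium of D_0 giving every player payoff exactly K. -/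
open Finset

noncomputable section

/-- Expected payoff under a mixed profile (x,y,w) for a payoff table `f`
(first argument of `f` is the action of the player receiving the payoff from
the player's own point of view). -/
def E3 {α : Type*} [Fintype α] (f : α → α → α → ℝ) (x y w : α → ℝ) : ℝ :=
  ∑ a, ∑ b, ∑ c, x a * y b * w c * f a b c

variable {S : Type*} [Fintype S] [DecidableEq S]

/-- `(y,y,y)` is a symmetric Nash equilibrium of the symmetric 3-player game with
Player-1 payoff table `u` (players 2 and 3 have tables `u b a c` and `u c a b`). -/
def SymNE (u : S → S → S → ℝ) (y : S → ℝ) : Prop :=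
  IsDist y ∧
  (∀ x', IsDist x' → E3 u x' y y ≤ E3 u y y y) ∧
  (∀ y', IsDist y' → E3 (fun a b c => u b a c) y y' y ≤ E3 (fun a b c => u b a c) y y y) ∧
  (∀ w', IsDist w' → E3 (fun a b c => u c a b) y y w' ≤ E3 (fun a b c => u c a b) y y y)

/-- Player 1's payoff table in D₁: the payoffs of D₀ when nobody plays ⊥ (`none`),
`K` when exactly one player plays ⊥, and `K+1` when at least two players play ⊥. -/
def payD1 (u : S → S → S → ℝ) (K : ℝ) :
    Option S → Option S → Option S → ℝ
  | some a, some b, some c => u a b c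
  | some _, some _, none   => K
  | some _, none,   some _ => K
  | none,   some _, some _ => K
  | some _, none,   none   => K + 1
  | none,   some _, none   => K + 1
  | none,   none,   some _ => K + 1
  | none,   none,   none   => K + 1

/-- The pure strategy ⊥ as a mixed strategy. -/
def deltaBot {α : Type*} [DecidableEq α] : Option α → ℝ :=
  fun o => if o = none then 1 else 0

end

section Aux
variable {α : Type*} [Fintype α]

lemma E3_eq (f : α → α → α → ℝ) (x y w : α → ℝ) :
    E3 f x y w = ∑ a, x a * (∑ b, ∑ c, y b * w c * f a b c) := by
  unfold E3
  refine Finset.sum_congr rfl fun a _ => ?_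
  rw [Finset.mul_sum]
  refine Finset.sum_congr rfl fun b _ => ?_
  rw [Finset.mul_sum]
  exact Finset.sum_congr rfl fun c _ => by ring

lemma E3_swap12 (f : α → α → α → ℝ) (x y w : α → ℝ) :
    E3 (fun a b c => f b a c) x y w = E3 f y x w := by
  unfold E3
  rw [Finset.sum_comm]
  exact Finset.sum_congr rfl fun b _ => Finset.sum_congr rfl fun a _ =>
    Finset.sum_congr rfl fun c _ => by ring

lemma E3_rot (f : α → α → α → ℝ) (x y w : α → ℝ) :
    E3 (fun a b c => f c a b) x y w = E3 f w x y := by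
  unfold E3
  have h1 : ∀ a ∈ (univ : Finset α), (∑ b, ∑ c, x a * y b * w c * f c a b)
      = ∑ c, ∑ b, x a * y b * w c * f c a b := fun a _ => Finset.sum_comm
  rw [Finset.sum_congr rfl h1, Finset.sum_comm]
  exact Finset.sum_congr rfl fun c _ => Finset.sum_congr rfl fun a _ =>
    Finset.sum_congr rfl fun b _ => by ring

lemma pure_isDist [DecidableEq α] (a : α) :
    IsDist (fun b => if b = a then 1 else (0:ℝ)) := by
  constructor
  · intro i; dsimp only; split <;> norm_num
  · simp

lemma E3_pure [DecidableEq α] (f : α → α → α → ℝ) (a : α) (y w : α → ℝ) :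
    E3 f (fun b => if b = a then 1 else 0) y w = ∑ b, ∑ c, y b * w c * f a b c := by
  rw [E3_eq]
  simp

lemma eq_on_support (y g : α → ℝ) (V : ℝ) (hy : IsDist y)
    (hle : ∀ a, g a ≤ V) (hsum : ∑ a, y a * g a = V) {a : α} (ha : y a ≠ 0) :
    g a = V := by
  by_contra h
  have hya : 0 < y a := lt_of_le_of_ne (hy.1 a) (Ne.symm ha)
  have hlt : y a * g a < y a * V :=
    mul_lt_mul_of_pos_left (lt_of_le_of_ne (hle a) h) hya
  have hstrict : ∑ b, y b * g b < ∑ b, y b * V :=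
    Finset.sum_lt_sum (fun b _ => mul_le_mul_of_nonneg_left (hle b) (hy.1 b))
      ⟨a, Finset.mem_univ a, hlt⟩
  rw [← Finset.sum_mul, hy.2, one_mul, hsum] at hstrict
  exact lt_irrefl _ hstrict

lemma sum_option2 {β : Type*} [Fintype β] (F : Option β → Option β → ℝ) :
    ∑ b, ∑ c, F b c = F none none + (∑ c, F none (some c)) + (∑ b, F (some b) none)
      + ∑ b, ∑ c, F (some b) (some c) := by
  simp only [Fintype.sum_option, Finset.sum_add_distrib]
  ring

lemma sum2_mul (z w : α → ℝ) (r : ℝ) :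
    ∑ b, ∑ c, z b * w c * r = (∑ b, z b) * (∑ c, w c) * r := by
  simp only [Finset.sum_mul, Finset.mul_sum]
  rw [Finset.sum_comm]

lemma sum_left_mul (z : α → ℝ) (r c : ℝ) :
    ∑ s, r * z s * c = r * (∑ s, z s) * c := by
  simp only [Finset.sum_mul, Finset.mul_sum]

lemma sum_right_mul (z : α → ℝ) (r c : ℝ) :
    ∑ s, z s * r * c = (∑ s, z s) * r * c := by
  simp only [Finset.sum_mul, Finset.mul_sum]

end Aux


section Aux2
variable {S : Type*} [Fintype S] [DecidableEq S]

lemma symNE_of_best (u : S → S → S → ℝ) (z : S → ℝ) (hz : IsDist z)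
    (h : ∀ x, IsDist x → E3 u x z z ≤ E3 u z z z) : SymNE u z := by
  refine ⟨hz, h, ?_, ?_⟩
  · intro y' hy'
    rw [E3_swap12 u z y' z, E3_swap12 u z z z]; exact h y' hy'
  · intro w' hw'
    rw [E3_rot u z z w', E3_rot u z z z]; exact h w' hw'

lemma delta2_sum (F : Option S → Option S → ℝ) :
    (∑ b, ∑ c, deltaBot b * deltaBot c * F b c) = F none none := by
  simp [deltaBot, Fintype.sum_option]

lemma payD1_none_none (u : S → S → S → ℝ) (K : ℝ) (a : Option S) :
    payD1 u K a none none = K + 1 := by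
  cases a <;> rfl

end Aux2

/-- If all symmetric Nash equilibria of the symmetric game D₀ give each player
payoff at most `K`, then in D₁ the profile (⊥,⊥,⊥) is a symmetric Nash
equilibrium with payoff `K+1` to every player, and every other symmetric Nash
equilibrium of D₁ puts probability 0 on ⊥ and restricts to a symmetric Nash
equilibrium of D₀ giving every player payoff exactly `K`. -/
theorem stmt19 {S : Type*} [Fintype S] [DecidableEq S]
    (u : S → S → S → ℝ) (hsymm : ∀ a b c, u a b c = u a c b) (K : ℝ)
    (hK : ∀ y : S → ℝ, SymNE u y → E3 u y y y ≤ K) :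
    SymNE (payD1 u K) (deltaBot : Option S → ℝ) ∧
    E3 (payD1 u K) (deltaBot : Option S → ℝ) deltaBot deltaBot = K + 1 ∧
    (∀ y : Option S → ℝ, SymNE (payD1 u K) y → y ≠ deltaBot →
      y none = 0 ∧ SymNE u (fun s => y (some s)) ∧
      E3 u (fun s => y (some s)) (fun s => y (some s)) (fun s => y (some s)) = K) := by
  classical
  have hbotDist : IsDist (deltaBot : Option S → ℝ) := by
    constructor
    · intro i; unfold deltaBot; split <;> norm_num
    · simp [deltaBot, Fintype.sum_option]
  have hconst : ∀ x : Option S → ℝ, IsDist x →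
      E3 (payD1 u K) x deltaBot deltaBot = K + 1 := by
    intro x hx
    rw [E3_eq]
    have h1 : ∀ a ∈ (Finset.univ : Finset (Option S)),
        x a * (∑ b, ∑ c, deltaBot b * deltaBot c * payD1 u K a b c) = x a * (K + 1) := by
      intro a _
      rw [delta2_sum, payD1_none_none]
    rw [Finset.sum_congr rfl h1, ← Finset.sum_mul, hx.2, one_mul]
  have hNEbot : SymNE (payD1 u K) (deltaBot : Option S → ℝ) := by
    refine ⟨hbotDist, ?_, ?_, ?_⟩
    · intro x' hx'; rw [hconst x' hx', hconst _ hbotDist]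
    · intro y' hy'
      rw [E3_swap12 (payD1 u K) deltaBot y' deltaBot,
        E3_swap12 (payD1 u K) deltaBot deltaBot deltaBot, hconst y' hy', hconst _ hbotDist]
    · intro w' hw'
      rw [E3_rot (payD1 u K) deltaBot deltaBot w',
        E3_rot (payD1 u K) deltaBot deltaBot deltaBot, hconst w' hw', hconst _ hbotDist]
  refine ⟨hNEbot, hconst _ hbotDist, ?_⟩
  intro y hNE hne
  obtain ⟨hy, hbr1, _, _⟩ := hNE
  set p := y none with hp_def
  set z : S → ℝ := fun s => y (some s) with hz_def
  set q := ∑ s, z s with hq_def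
  have hpq : p + q = 1 := by
    have h2 := hy.2
    rwa [Fintype.sum_option] at h2
  have hp0 : 0 ≤ p := hy.1 none
  have hz0 : ∀ s, 0 ≤ z s := fun s => hy.1 (some s)
  have hq0 : 0 ≤ q := Finset.sum_nonneg fun s _ => hz0 s
  have hqne : q ≠ 0 := by
    intro h0
    apply hne
    funext o
    cases o with
    | none =>
      show y none = deltaBot none
      simp only [deltaBot]
      norm_num
      linarith
    | some s =>
      show z s = deltaBot (some s)
      have hzs : z s = 0 := by
        have hall := (Finset.sum_eq_zero_iff_of_nonneg
          (fun t (_ : t ∈ Finset.univ) => hz0 t)).mp (by rw [← hq_def]; exact h0)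
        exact hall s (Finset.mem_univ s)
      simp [deltaBot, hzs]
  set P : Option S → ℝ := fun a => ∑ b, ∑ c, y b * y c * payD1 u K a b c with hP_def
  set V := E3 (payD1 u K) y y y with hV_def
  have hVeq : V = ∑ a, y a * P a := E3_eq _ _ _ _
  have hPle : ∀ a, P a ≤ V := by
    intro a
    have h3 := hbr1 (fun b => if b = a then 1 else 0) (pure_isDist a)
    rwa [E3_pure] at h3
  set U : S → ℝ := fun s => ∑ b, ∑ c, z b * z c * u s b c with hU_def
  have hPnone : P none = (K+1)*(p*p) + (K+1)*(p*q) + (K+1)*(q*p) + K*(q*q) := by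
    show (∑ b, ∑ c, y b * y c * payD1 u K none b c) = _
    rw [sum_option2 (fun b c => y b * y c * payD1 u K none b c)]
    have e1 : (∑ c, y none * y (some c) * payD1 u K none none (some c))
        = p * q * (K+1) := by
      have : ∀ c, payD1 u K none none (some c) = K + 1 := fun c => rfl
      simp only [this]
      rw [sum_left_mul]
    have e2 : (∑ b, y (some b) * y none * payD1 u K none (some b) none)
        = q * p * (K+1) := by
      have : ∀ b, payD1 u K none (some b) none = K + 1 := fun b => rfl
      simp only [this]
      rw [sum_right_mul]
    have e3 : (∑ b, ∑ c, y (some b) * y (some c) * payD1 u K none (some b) (some c))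
        = q * q * K := by
      have : ∀ b c, payD1 u K none (some b) (some c) = K := fun b c => rfl
      simp only [this]
      rw [sum2_mul]
    rw [e1, e2, e3]
    show p * p * payD1 u K none none none + _ + _ + _ = _
    have : payD1 u K none none none = K + 1 := rfl
    rw [this]; ring
  have hPsome : ∀ s, P (some s) = U s + p*q*K + q*p*K + p*p*(K+1) := by
    intro s
    show (∑ b, ∑ c, y b * y c * payD1 u K (some s) b c) = _
    rw [sum_option2 (fun b c => y b * y c * payD1 u K (some s) b c)]
    have e1 : (∑ c, y none * y (some c) * payD1 u K (some s) none (some c))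
        = p * q * K := by
      have : ∀ c, payD1 u K (some s) none (some c) = K := fun c => rfl
      simp only [this]
      rw [sum_left_mul]
    have e2 : (∑ b, y (some b) * y none * payD1 u K (some s) (some b) none)
        = q * p * K := by
      have : ∀ b, payD1 u K (some s) (some b) none = K := fun b => rfl
      simp only [this]
      rw [sum_right_mul]
    have e3 : (∑ b, ∑ c, y (some b) * y (some c) * payD1 u K (some s) (some b) (some c))
        = U s := by
      rfl
    rw [e1, e2, e3]
    show p * p * payD1 u K (some s) none none + _ + _ + _ = _
    have : payD1 u K (some s) none none = K + 1 := rfl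
    rw [this]; ring
  have hp_eq : p = 0 := by
    by_contra hpne
    have hppos : 0 < p := lt_of_le_of_ne hp0 (Ne.symm hpne)
    have hqpos : 0 < q := lt_of_le_of_ne hq0 (Ne.symm hqne)
    have hPnoneV : P none = V := eq_on_support y P V hy hPle hVeq.symm hpne
    set zn : S → ℝ := fun s => z s / q with hzn_def
    have hznDist : IsDist zn := by
      constructor
      · exact fun s => div_nonneg (hz0 s) hq0
      · rw [hzn_def]
        rw [← Finset.sum_div, ← hq_def, div_self hqne]
    set Un : S → ℝ := fun s => ∑ b, ∑ c, zn b * zn c * u s b c with hUn_def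
    have hUnUs : ∀ s, Un s = U s / (q*q) := by
      intro s
      show (∑ b, ∑ c, (z b / q) * (z c / q) * u s b c) = (∑ b, ∑ c, z b * z c * u s b c) / (q*q)
      rw [Finset.sum_div]
      refine Finset.sum_congr rfl fun b _ => ?_
      rw [Finset.sum_div]
      refine Finset.sum_congr rfl fun c _ => ?_
      field_simp
      try ring
    set M : ℝ := (K*q + 2*p) / q with hM_def
    have hUle : ∀ s, U s ≤ q*(K*q + 2*p) := by
      intro s
      have h4 := hPle (some s)
      rw [hPsome s, ← hPnoneV, hPnone] at h4
      nlinarith [h4]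
    have hUeq : ∀ s, z s ≠ 0 → U s = q*(K*q + 2*p) := by
      intro s hs
      have h5 := eq_on_support y P V hy hPle hVeq.symm (a := some s) hs
      rw [hPsome s, ← hPnoneV, hPnone] at h5
      linear_combination h5
    have hUnle : ∀ s, Un s ≤ M := by
      intro s
      rw [hUnUs s, hM_def, div_le_div_iff₀ (by positivity) hqpos]
      nlinarith [hUle s]
    have hUneq : ∀ s, zn s ≠ 0 → Un s = M := by
      intro s hs
      have hzs : z s ≠ 0 := by
        intro h0; apply hs; rw [hzn_def]; simp [h0]
      rw [hUnUs s, hUeq s hzs, hM_def]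
      field_simp
      try ring
    have hEn : E3 u zn zn zn = M := by
      rw [E3_eq]
      have : ∀ s ∈ (Finset.univ : Finset S), zn s * Un s = zn s * M := by
        intro s _
        by_cases hzs : zn s = 0
        · rw [hzs, zero_mul, zero_mul]
        · rw [hUneq s hzs]
      rw [Finset.sum_congr rfl this, ← Finset.sum_mul, hznDist.2, one_mul]
    have hSymNEzn : SymNE u zn := by
      apply symNE_of_best u zn hznDist
      intro x hx
      rw [hEn, E3_eq]
      calc ∑ s, x s * Un s ≤ ∑ s, x s * M :=
            Finset.sum_le_sum fun s _ => mul_le_mul_of_nonneg_left (hUnle s) (hx.1 s)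
        _ = M := by rw [← Finset.sum_mul, hx.2, one_mul]
    have hKzn := hK zn hSymNEzn
    rw [hEn, hM_def] at hKzn
    rw [div_le_iff₀ hqpos] at hKzn
    nlinarith
  -- now p = 0
  have hq1 : q = 1 := by linarith
  have hzDist : IsDist z := ⟨hz0, hq1⟩
  have hPsome' : ∀ s, P (some s) = U s := by
    intro s; rw [hPsome s, hp_eq]; ring
  have hPnoneK : P none = K := by
    rw [hPnone, hp_eq, hq1]; ring
  have hVz : V = E3 u z z z := by
    rw [hVeq, Fintype.sum_option, ← hp_def, hp_eq, zero_mul, zero_add, E3_eq]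
    exact Finset.sum_congr rfl fun s _ => by rw [hPsome' s]
  have hbest : ∀ x, IsDist x → E3 u x z z ≤ E3 u z z z := by
    intro x hx
    rw [E3_eq, ← hVz]
    calc ∑ s, x s * (∑ b, ∑ c, z b * z c * u s b c)
        = ∑ s, x s * U s := rfl
      _ ≤ ∑ s, x s * V :=
          Finset.sum_le_sum fun s _ => mul_le_mul_of_nonneg_left
            (by rw [← hPsome' s]; exact hPle (some s)) (hx.1 s)
      _ = V := by rw [← Finset.sum_mul, hx.2, one_mul]
  have hSymNEz : SymNE u z := symNE_of_best u z hzDist hbest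
  have hKz := hK z hSymNEz
  have hKle : K ≤ E3 u z z z := by
    rw [← hVz, ← hPnoneK]
    exact hPle none
  exact ⟨hp_eq, hSymNEz, le_antisymm hKz hKle⟩
end
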